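/- arXiv:1903.04242 — 2 statements merged into one kernel-verified Lean document; each statement's English description precedes it below -/
import Mathlib

section
/- For each fixed x ≥ 0 the map ζ ↦ φ(x,ζ) is an entire function of ζ, and φ(x,ζ) = φ(x,−ζ) for all ζ ∈ ℂ. -/
/-!
The regular solution is the limit of the Picard iterates `φ₀ = 0`,
`φₙ₊₁(x) = S(x) + ∫₀ˣ S(x - y) v(y) φₙ(y) dy`. Each iterate is even in `ζ` because `S` is, and
entire in `ζ` by differentiation under the integral sign, the derivative being controlled by
Cauchy's estimate. For `|ζ| ≤ R` the kernel is bounded on `[0, x]` by `K = x e^{Rx}`, so with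
`|v| ≤ C` the usual Volterra estimate gives `‖φ - φₙ‖ ≤ M (KCx)ⁿ / n!` on `[0, x]`, where the
uniform bound `M = K e^{KCx}` on `φ` is inherited from the iterates. Hence the iterates converge
locally uniformly in `ζ`, and the limit is entire and even.
-/

open MeasureTheory Set

/-- `S ζ t = sin(ζ t)/ζ` for `ζ ≠ 0`, and `S 0 t = t`. -/
noncomputable def S (ζ : ℂ) (t : ℝ) : ℂ :=
  if ζ = 0 then (t : ℂ) else Complex.sin (ζ * t) / ζ

open Filter Metric Topology

lemma Complex.norm_cos_le_exp_norm (z : ℂ) : ‖Complex.cos z‖ ≤ Real.exp ‖z‖ := by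
  have h : ∀ w : ℂ, ‖w‖ = ‖z‖ → ‖Complex.exp w‖ ≤ Real.exp ‖z‖ := fun w hw =>
    hw ▸ Complex.norm_exp_le_exp_norm w
  have h₂ : ‖2 * Complex.cos z‖ ≤ 2 * Real.exp ‖z‖ := by
    rw [Complex.two_cos]
    refine (norm_add_le _ _).trans ?_
    linarith [h (z * Complex.I) (by simp), h (-z * Complex.I) (by simp)]
  rw [norm_mul, Complex.norm_two] at h₂
  linarith

lemma S_neg (ζ : ℂ) (t : ℝ) : S (-ζ) t = S ζ t := by
  rcases eq_or_ne ζ 0 with rfl | hζ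
  · simp
  · simp [S, hζ, neg_div_neg_eq]

lemma S_eq_dslope (ζ : ℂ) (t : ℝ) : S ζ t = dslope (fun z : ℂ => Complex.sin (z * t)) 0 ζ := by
  rcases eq_or_ne ζ 0 with rfl | hζ
  · have : HasDerivAt (fun z : ℂ => Complex.sin (z * t)) (Complex.cos (0 * t) * t) 0 :=
      (Complex.hasDerivAt_sin _).comp 0 (hasDerivAt_mul_const _)
    simp [S, dslope_same, this.deriv]
  · simp [S, hζ, dslope_of_ne _ hζ, slope, div_eq_inv_mul]

lemma differentiable_S (t : ℝ) : Differentiable ℂ (fun ζ => S ζ t) := by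
  simp only [S_eq_dslope, ← differentiableOn_univ]
  exact (Complex.differentiableOn_dslope univ_mem).2 (by fun_prop)

lemma hasDerivAt_S (ζ : ℂ) (t : ℝ) :
    HasDerivAt (fun s : ℝ => S ζ s) (Complex.cos (ζ * t)) t := by
  rcases eq_or_ne ζ 0 with rfl | hζ
  · simpa [S] using (hasDerivAt_id t).ofReal_comp
  · simp only [S, if_neg hζ]
    have hlin : HasDerivAt (fun s : ℝ => ζ * (s : ℂ)) ζ t := by
      simpa using (hasDerivAt_id t).ofReal_comp.const_mul ζ
    simpa [mul_div_assoc, hζ] using ((Complex.hasDerivAt_sin _).comp t hlin).div_const ζ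

lemma continuous_S (ζ : ℂ) : Continuous (fun t : ℝ => S ζ t) :=
  continuous_iff_continuousAt.2 fun t => (hasDerivAt_S ζ t).continuousAt

lemma S_eq_integral_cos (ζ : ℂ) (t : ℝ) : S ζ t = ∫ s in (0 : ℝ)..t, Complex.cos (ζ * s) := by
  rw [intervalIntegral.integral_eq_sub_of_hasDerivAt (fun s _ => hasDerivAt_S ζ s)
    ((by fun_prop : Continuous fun s : ℝ => Complex.cos (ζ * s)).intervalIntegrable _ _)]
  simp [S]

lemma norm_S_le {ζ : ℂ} {t : ℝ} (ht : 0 ≤ t) : ‖S ζ t‖ ≤ t * Real.exp (‖ζ‖ * t) := by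
  rw [S_eq_integral_cos]
  refine (intervalIntegral.norm_integral_le_of_norm_le_const (C := Real.exp (‖ζ‖ * t))
    fun s hs => ?_).trans_eq (by rw [sub_zero, abs_of_nonneg ht, mul_comm])
  rw [uIoc_of_le ht] at hs
  refine (Complex.norm_cos_le_exp_norm _).trans (Real.exp_le_exp.2 ?_)
  rw [norm_mul, Complex.norm_real, Real.norm_of_nonneg hs.1.le]
  exact mul_le_mul_of_nonneg_left hs.2 (norm_nonneg ζ)

lemma S_sub (ζ : ℂ) (a b : ℝ) :
    S ζ (a - b) = S ζ a * Complex.cos (ζ * b) - Complex.cos (ζ * a) * S ζ b := by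
  rcases eq_or_ne ζ 0 with rfl | hζ
  · simp [S]
  · simp only [S, if_neg hζ, Complex.ofReal_sub, mul_sub, Complex.sin_sub]
    ring

lemma norm_S_le_of_mem_Icc {ζ : ℂ} {R s x : ℝ} (hζ : ‖ζ‖ ≤ R) (hs : s ∈ Icc 0 x) :
    ‖S ζ s‖ ≤ x * Real.exp (R * x) :=
  (norm_S_le hs.1).trans <| mul_le_mul hs.2
    (Real.exp_le_exp.2 (mul_le_mul hζ hs.2 hs.1 ((norm_nonneg ζ).trans hζ)))
    (Real.exp_nonneg _) (hs.1.trans hs.2)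

section ParametricHolomorphy

variable {α E : Type*} [MeasurableSpace α] {μ : Measure α} [NormedAddCommGroup E]
  [NormedSpace ℂ E]

lemma aestronglyMeasurable_deriv_of_ae_differentiableAt {G : ℂ → α → E} (ζ₀ : ℂ)
    (hG_meas : ∀ ζ, AEStronglyMeasurable (G ζ) μ)
    (hG_diff : ∀ᵐ a ∂μ, DifferentiableAt ℂ (G · a) ζ₀) :
    AEStronglyMeasurable (fun a => deriv (G · a) ζ₀) μ := by
  have hseq : Tendsto (fun n : ℕ => 1 / ((n : ℂ) + 1)) atTop (𝓝[≠] 0) :=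
    tendsto_nhdsWithin_of_tendsto_nhds_of_eventually_within _
      tendsto_one_div_add_atTop_nhds_zero_nat
      (Eventually.of_forall fun n => by simpa using Nat.cast_add_one_ne_zero (R := ℂ) n)
  refine aestronglyMeasurable_of_tendsto_ae (atTop : Filter ℕ)
    (f := fun n a => (1 / ((n : ℂ) + 1))⁻¹ • (G (ζ₀ + 1 / ((n : ℂ) + 1)) a - G ζ₀ a))
    (fun n => ((hG_meas _).sub (hG_meas _)).const_smul _) ?_
  filter_upwards [hG_diff] with a ha
  exact (hasDerivAt_iff_tendsto_slope_zero.1 ha.hasDerivAt).comp hseq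

lemma differentiableAt_integral_of_dominated {G : ℂ → α → E} {ζ₀ : ℂ} {r : ℝ} (hr : 0 < r)
    {bound : α → ℝ} (hG_meas : ∀ ζ, AEStronglyMeasurable (G ζ) μ)
    (hG_diff : ∀ᵐ a ∂μ, Differentiable ℂ (G · a))
    (h_bound : ∀ᵐ a ∂μ, ∀ ζ ∈ ball ζ₀ r, ‖G ζ a‖ ≤ bound a)
    (bound_integrable : Integrable bound μ) :
    DifferentiableAt ℂ (fun ζ => ∫ a, G ζ a ∂μ) ζ₀ := by
  have h_deriv_bound : ∀ᵐ a ∂μ, ∀ ζ ∈ ball ζ₀ (r / 2), ‖deriv (G · a) ζ‖ ≤ bound a / (r / 2) := by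
    filter_upwards [hG_diff, h_bound] with a hd hb ζ hζ
    refine Complex.norm_deriv_le_of_forall_mem_sphere_norm_le (half_pos hr) hd.diffContOnCl
      fun w hw => hb w ?_
    rw [mem_sphere] at hw
    rw [mem_ball] at hζ ⊢
    linarith [dist_triangle w ζ ζ₀]
  exact (hasDerivAt_integral_of_dominated_loc_of_deriv_le (ball_mem_nhds ζ₀ (half_pos hr))
    (Eventually.of_forall hG_meas)
    (bound_integrable.mono' (hG_meas ζ₀) (h_bound.mono fun a ha => ha ζ₀ (mem_ball_self hr)))
    (aestronglyMeasurable_deriv_of_ae_differentiableAt ζ₀ hG_meas (hG_diff.mono fun a ha => ha ζ₀))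
    h_deriv_bound (bound_integrable.div_const _)
    (hG_diff.mono fun a ha ζ _ => (ha ζ).hasDerivAt)).2.differentiableAt

end ParametricHolomorphy

lemma le_mul_pow_div_factorial_of_le_integral {u : ℕ → ℝ → ℝ} {M B x : ℝ} (hB : 0 ≤ B)
    (hu : ∀ n, ContinuousOn (u n) (Icc 0 x)) (h0 : ∀ t ∈ Icc 0 x, u 0 t ≤ M)
    (hsucc : ∀ n, ∀ t ∈ Icc 0 x, u (n + 1) t ≤ B * ∫ y in (0 : ℝ)..t, u n y) (n : ℕ) :
    ∀ t ∈ Icc 0 x, u n t ≤ M * (B * t) ^ n / n.factorial := by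
  induction n with
  | zero => simpa using h0
  | succ n ih =>
    intro t ht
    have hsub : uIcc 0 t ⊆ Icc 0 x := (uIcc_of_le ht.1).trans_subset (Icc_subset_Icc_right ht.2)
    have hint : ∫ y in (0 : ℝ)..t, M * (B * y) ^ n / n.factorial =
        M * B ^ n / n.factorial * (t ^ (n + 1) / (n + 1)) := by
      have hpoly : (fun y : ℝ => M * (B * y) ^ n / n.factorial) =
          fun y => M * B ^ n / n.factorial * y ^ n := by
        ext y
        ring
      rw [hpoly, intervalIntegral.integral_const_mul, integral_pow, zero_pow n.succ_ne_zero,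
        sub_zero]
    calc u (n + 1) t ≤ B * ∫ y in (0 : ℝ)..t, u n y := hsucc n t ht
      _ ≤ B * ∫ y in (0 : ℝ)..t, M * (B * y) ^ n / n.factorial := by
        gcongr
        exact intervalIntegral.integral_mono_on ht.1 ((hu n).mono hsub).intervalIntegrable
          ((by fun_prop : Continuous fun y : ℝ => M * (B * y) ^ n / n.factorial)
            |>.intervalIntegrable _ _) fun y hy => ih y (hsub (Icc_subset_uIcc hy))
      _ = M * (B * t) ^ (n + 1) / (n + 1).factorial := by
        rw [hint, Nat.factorial_succ]
        push_cast
        field_simp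
        ring

noncomputable def volterra (v : ℝ → ℝ) (ζ : ℂ) (f : ℝ → ℂ) (t : ℝ) : ℂ :=
  S ζ t + ∫ y in (0 : ℝ)..t, S ζ (t - y) * (v y : ℂ) * f y

lemma volterra_neg (v : ℝ → ℝ) (ζ : ℂ) : volterra v (-ζ) = volterra v ζ := by
  ext f t
  simp only [volterra, S_neg]

section Volterra

variable {v : ℝ → ℝ} {C x t : ℝ} {ζ : ℂ}

lemma intervalIntegrable_mul_ofReal_mul (hv : IntegrableOn v (Icc 0 x)) (ht : t ∈ Icc 0 x)
    {g f : ℝ → ℂ} (hg : Continuous g) (hf : ContinuousOn f (Icc 0 x)) :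
    IntervalIntegrable (fun y => g y * (v y : ℂ) * f y) volume 0 t := by
  have hsub : uIcc 0 t ⊆ Icc 0 x := (uIcc_of_le ht.1).trans_subset (Icc_subset_Icc_right ht.2)
  have hv' : IntervalIntegrable (fun y => (v y : ℂ)) volume 0 t :=
    IntegrableOn.intervalIntegrable ((hv.mono_set hsub).ofReal (𝕜 := ℂ))
  exact (hv'.continuousOn_mul hg.continuousOn).mul_continuousOn (hf.mono hsub)

/-- `S_sub` separates the variables of the kernel; this gives continuity of `volterra v ζ f` in `t`
although `v` is merely integrable. -/
lemma volterra_eq_separated (hv : IntegrableOn v (Icc 0 x)) (ht : t ∈ Icc 0 x) {f : ℝ → ℂ}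
    (hf : ContinuousOn f (Icc 0 x)) :
    volterra v ζ f t = S ζ t + (S ζ t * ∫ y in (0 : ℝ)..t, Complex.cos (ζ * y) * v y * f y) -
      Complex.cos (ζ * t) * ∫ y in (0 : ℝ)..t, S ζ y * v y * f y := by
  rw [volterra, add_sub_assoc, ← intervalIntegral.integral_const_mul,
    ← intervalIntegral.integral_const_mul, ← intervalIntegral.integral_sub
      ((intervalIntegrable_mul_ofReal_mul hv ht (by fun_prop) hf).const_mul _)
      ((intervalIntegrable_mul_ofReal_mul hv ht (continuous_S ζ) hf).const_mul _)]
  congr 1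
  refine intervalIntegral.integral_congr fun y _ => ?_
  simp only [S_sub]
  ring

lemma continuousOn_volterra (hv : IntegrableOn v (Icc 0 x)) (hx : 0 ≤ x) {f : ℝ → ℂ}
    (hf : ContinuousOn f (Icc 0 x)) : ContinuousOn (volterra v ζ f) (Icc 0 x) := by
  have hprim : ∀ g : ℝ → ℂ, Continuous g →
      ContinuousOn (fun t => ∫ y in (0 : ℝ)..t, g y * v y * f y) (Icc 0 x) := fun g hg => by
    simpa only [uIcc_of_le hx] using intervalIntegral.continuousOn_primitive_interval'
      (intervalIntegrable_mul_ofReal_mul hv ⟨hx, le_rfl⟩ hg hf) left_mem_uIcc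
  have hcos : Continuous fun t : ℝ => Complex.cos (ζ * t) := by fun_prop
  refine ContinuousOn.congr ?_ fun t ht => volterra_eq_separated hv ht hf
  exact ((continuous_S ζ).continuousOn.add
    ((continuous_S ζ).continuousOn.mul (hprim _ hcos))).sub
    (hcos.continuousOn.mul (hprim _ (continuous_S ζ)))

lemma norm_volterra_sub_le (hv : IntegrableOn v (Icc 0 x)) (hvC : ∀ y ∈ Icc 0 x, |v y| ≤ C)
    {K : ℝ} (hK : ∀ s ∈ Icc 0 x, ‖S ζ s‖ ≤ K) {f g : ℝ → ℂ} (hf : ContinuousOn f (Icc 0 x))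
    (hg : ContinuousOn g (Icc 0 x)) (ht : t ∈ Icc 0 x) :
    ‖volterra v ζ f t - volterra v ζ g t‖ ≤ K * C * ∫ y in (0 : ℝ)..t, ‖f y - g y‖ := by
  have hsub : Icc 0 t ⊆ Icc 0 x := Icc_subset_Icc_right ht.2
  have hkernel : Continuous fun y => S ζ (t - y) := (continuous_S ζ).comp (by fun_prop)
  have hdiff : volterra v ζ f t - volterra v ζ g t =
      ∫ y in (0 : ℝ)..t, S ζ (t - y) * v y * (f - g) y := by
    rw [volterra, volterra, add_sub_add_left_eq_sub, ← intervalIntegral.integral_sub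
      (intervalIntegrable_mul_ofReal_mul hv ht hkernel hf)
      (intervalIntegrable_mul_ofReal_mul hv ht hkernel hg)]
    simp only [Pi.sub_apply, mul_sub]
  rw [hdiff, ← intervalIntegral.integral_const_mul]
  refine (intervalIntegral.norm_integral_le_integral_norm ht.1).trans <|
    intervalIntegral.integral_mono_on ht.1
      (intervalIntegrable_mul_ofReal_mul hv ht hkernel (hf.sub hg)).norm
      ((((hf.sub hg).mono hsub).norm.intervalIntegrable_of_Icc ht.1).const_mul _) fun y hy => ?_
  rw [norm_mul, norm_mul, Complex.norm_real, Real.norm_eq_abs, Pi.sub_apply]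
  have hS := hK (t - y) ⟨by linarith [hy.2], by linarith [hy.1, ht.2]⟩
  exact mul_le_mul_of_nonneg_right (mul_le_mul hS (hvC y (hsub hy)) (abs_nonneg _)
    ((norm_nonneg _).trans hS)) (norm_nonneg _)

end Volterra

noncomputable def picard (v : ℝ → ℝ) (ζ : ℂ) (n : ℕ) : ℝ → ℂ :=
  (volterra v ζ)^[n] 0

lemma picard_neg (v : ℝ → ℝ) (ζ : ℂ) (n : ℕ) : picard v (-ζ) n = picard v ζ n := by
  rw [picard, picard, volterra_neg]

section Picard

variable {v : ℝ → ℝ} {ζ : ℂ} {C K x t : ℝ}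

lemma picard_zero : picard v ζ 0 = 0 := rfl

lemma picard_succ (n : ℕ) : picard v ζ (n + 1) = volterra v ζ (picard v ζ n) :=
  Function.iterate_succ_apply' _ _ _

lemma picard_one : picard v ζ 1 = fun t => S ζ t := by
  ext t
  simp [picard_succ, picard_zero, volterra]

lemma continuousOn_picard (hv : IntegrableOn v (Icc 0 x)) (hx : 0 ≤ x) (n : ℕ) :
    ContinuousOn (picard v ζ n) (Icc 0 x) := by
  induction n with
  | zero => exact continuousOn_const
  | succ n ih => exact picard_succ n ▸ continuousOn_volterra hv hx ih

lemma norm_picard_succ_sub_le (hv : IntegrableOn v (Icc 0 x)) (hvC : ∀ y ∈ Icc 0 x, |v y| ≤ C)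
    (hx : 0 ≤ x) (hK : ∀ s ∈ Icc 0 x, ‖S ζ s‖ ≤ K) (n : ℕ) (ht : t ∈ Icc 0 x) :
    ‖picard v ζ (n + 1) t - picard v ζ n t‖ ≤ K * (K * C * t) ^ n / n.factorial := by
  have hKC : 0 ≤ K * C := mul_nonneg ((norm_nonneg _).trans (hK 0 ⟨le_rfl, hx⟩))
    ((abs_nonneg _).trans (hvC 0 ⟨le_rfl, hx⟩))
  refine le_mul_pow_div_factorial_of_le_integral
    (u := fun n t => ‖picard v ζ (n + 1) t - picard v ζ n t‖) hKC
    (fun n => ((continuousOn_picard hv hx _).sub (continuousOn_picard hv hx _)).norm)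
    (fun t ht => by simpa [picard_one, picard_zero] using hK t ht) (fun n t ht => ?_) n t ht
  simpa only [← picard_succ] using norm_volterra_sub_le hv hvC hK
    (continuousOn_picard (ζ := ζ) hv hx (n + 1)) (continuousOn_picard (ζ := ζ) hv hx n) ht

lemma norm_picard_le (hv : IntegrableOn v (Icc 0 x)) (hvC : ∀ y ∈ Icc 0 x, |v y| ≤ C)
    (hx : 0 ≤ x) (hK : ∀ s ∈ Icc 0 x, ‖S ζ s‖ ≤ K) (n : ℕ) (ht : t ∈ Icc 0 x) :
    ‖picard v ζ n t‖ ≤ K * Real.exp (K * C * x) := by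
  have hK0 : 0 ≤ K := (norm_nonneg _).trans (hK 0 ⟨le_rfl, hx⟩)
  have hKC : 0 ≤ K * C := mul_nonneg hK0 ((abs_nonneg _).trans (hvC 0 ⟨le_rfl, hx⟩))
  calc ‖picard v ζ n t‖ = dist (picard v ζ 0 t) (picard v ζ n t) := by
        rw [picard_zero, Pi.zero_apply, dist_zero_left]
    _ ≤ ∑ i ∈ Finset.range n, dist (picard v ζ i t) (picard v ζ (i + 1) t) :=
        dist_le_range_sum_dist (fun i => picard v ζ i t) n
    _ ≤ ∑ i ∈ Finset.range n, K * ((K * C * t) ^ i / i.factorial) :=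
        Finset.sum_le_sum fun i _ => by
          rw [dist_comm, dist_eq_norm, ← mul_div_assoc]
          exact norm_picard_succ_sub_le hv hvC hx hK i ht
    _ ≤ K * Real.exp (K * C * x) := by
        rw [← Finset.mul_sum]
        refine mul_le_mul_of_nonneg_left ?_ hK0
        exact (Real.sum_le_exp_of_nonneg (mul_nonneg hKC ht.1) n).trans
          (Real.exp_le_exp.2 (mul_le_mul_of_nonneg_left ht.2 hKC))

end Picard

lemma differentiable_picard {v : ℝ → ℝ} {C : ℝ} (hv : ∀ x, IntegrableOn v (Icc 0 x))
    (hvC : ∀ y, 0 ≤ y → |v y| ≤ C) (n : ℕ) :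
    ∀ t, 0 ≤ t → Differentiable ℂ fun ζ => picard v ζ n t := by
  induction n with
  | zero => exact fun t _ => differentiable_const 0
  | succ n ih =>
    intro t ht ζ₀
    set K := t * Real.exp ((‖ζ₀‖ + 1) * t)
    have hK : ∀ ζ ∈ ball ζ₀ 1, ∀ s ∈ Icc 0 t, ‖S ζ s‖ ≤ K := fun ζ hζ s hs =>
      norm_S_le_of_mem_Icc
        (by linarith [norm_le_norm_add_norm_sub' ζ ζ₀, mem_ball_iff_norm.1 hζ]) hs
    have hvC' : ∀ y ∈ Icc 0 t, |v y| ≤ C := fun y hy => hvC y hy.1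
    simp only [picard_succ, volterra, intervalIntegral.integral_of_le ht]
    refine (differentiable_S t ζ₀).add <| differentiableAt_integral_of_dominated one_pos
      (bound := fun _ => K * C * (K * Real.exp (K * C * t))) (fun ζ => ?_) ?_ ?_
      (integrable_const _)
    · exact (intervalIntegrable_mul_ofReal_mul (hv t) ⟨ht, le_rfl⟩ ((continuous_S ζ).comp
        (by fun_prop)) (continuousOn_picard (hv t) ht n)).1.aestronglyMeasurable
    · refine ae_restrict_of_forall_mem measurableSet_Ioc fun y hy => ?_
      exact ((differentiable_S _).mul_const _).mul (ih y hy.1.le)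
    · refine ae_restrict_of_forall_mem measurableSet_Ioc fun y hy ζ hζ => ?_
      have hy' : y ∈ Icc 0 t := Ioc_subset_Icc_self hy
      have hS := hK ζ hζ (t - y) ⟨by linarith [hy.2], by linarith [hy.1]⟩
      rw [norm_mul, norm_mul, Complex.norm_real, Real.norm_eq_abs]
      exact mul_le_mul (mul_le_mul hS (hvC' y hy') (abs_nonneg _) ((norm_nonneg _).trans hS))
        (norm_picard_le (hv t) hvC' ht (hK ζ hζ) n hy') (norm_nonneg _)
        (mul_nonneg ((norm_nonneg _).trans hS) ((abs_nonneg _).trans (hvC' y hy')))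

section Solution

variable {v : ℝ → ℝ} {ζ : ℂ} {C x t : ℝ} {φ : ℝ → ℂ}

lemma norm_sub_picard_le (hv : IntegrableOn v (Icc 0 x)) (hvC : ∀ y ∈ Icc 0 x, |v y| ≤ C)
    (hx : 0 ≤ x) {K : ℝ} (hK : ∀ s ∈ Icc 0 x, ‖S ζ s‖ ≤ K) (hφ : ContinuousOn φ (Icc 0 x))
    (hφeq : ∀ t ∈ Icc 0 x, φ t = volterra v ζ φ t) {M : ℝ} (hM : ∀ t ∈ Icc 0 x, ‖φ t‖ ≤ M)
    (n : ℕ) (ht : t ∈ Icc 0 x) :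
    ‖φ t - picard v ζ n t‖ ≤ M * (K * C * t) ^ n / n.factorial := by
  have hKC : 0 ≤ K * C := mul_nonneg ((norm_nonneg _).trans (hK 0 ⟨le_rfl, hx⟩))
    ((abs_nonneg _).trans (hvC 0 ⟨le_rfl, hx⟩))
  refine le_mul_pow_div_factorial_of_le_integral (u := fun n t => ‖φ t - picard v ζ n t‖) hKC
    (fun n => (hφ.sub (continuousOn_picard hv hx n)).norm)
    (fun t ht => by simpa [picard_zero] using hM t ht) (fun n t ht => ?_) n t ht
  rw [hφeq t ht, picard_succ]
  exact norm_volterra_sub_le hv hvC hK hφ (continuousOn_picard hv hx n) ht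

lemma tendsto_picard (hv : IntegrableOn v (Icc 0 x)) (hvC : ∀ y ∈ Icc 0 x, |v y| ≤ C)
    (hx : 0 ≤ x) (hφ : ContinuousOn φ (Icc 0 x)) (hφeq : ∀ t ∈ Icc 0 x, φ t = volterra v ζ φ t)
    (ht : t ∈ Icc 0 x) : Tendsto (fun n => picard v ζ n t) atTop (𝓝 (φ t)) := by
  obtain ⟨M, hM⟩ := isCompact_Icc.exists_bound_of_continuousOn hφ
  have hK : ∀ s ∈ Icc 0 x, ‖S ζ s‖ ≤ x * Real.exp (‖ζ‖ * x) :=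
    fun s hs => norm_S_le_of_mem_Icc le_rfl hs
  rw [tendsto_iff_norm_sub_tendsto_zero]
  have hfact := (FloorSemiring.tendsto_pow_div_factorial_atTop
    (x * Real.exp (‖ζ‖ * x) * C * t)).const_mul M
  rw [mul_zero] at hfact
  refine squeeze_zero (fun n => norm_nonneg _) (fun n => ?_) hfact
  rw [norm_sub_rev, ← mul_div_assoc]
  exact norm_sub_picard_le hv hvC hx hK hφ hφeq hM n ht

lemma norm_le_of_eq_volterra (hv : IntegrableOn v (Icc 0 x)) (hvC : ∀ y ∈ Icc 0 x, |v y| ≤ C)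
    (hx : 0 ≤ x) {K : ℝ} (hK : ∀ s ∈ Icc 0 x, ‖S ζ s‖ ≤ K) (hφ : ContinuousOn φ (Icc 0 x))
    (hφeq : ∀ t ∈ Icc 0 x, φ t = volterra v ζ φ t) (ht : t ∈ Icc 0 x) :
    ‖φ t‖ ≤ K * Real.exp (K * C * x) :=
  le_of_tendsto' (tendsto_picard hv hvC hx hφ hφeq ht).norm fun n =>
    norm_picard_le hv hvC hx hK n ht

end Solution

lemma tendstoUniformlyOn_picard {v : ℝ → ℝ} {C x : ℝ} (hv : IntegrableOn v (Icc 0 x))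
    (hvC : ∀ y ∈ Icc 0 x, |v y| ≤ C) (hx : 0 ≤ x) {φ : ℂ → ℝ → ℂ}
    (hφ : ∀ ζ, ContinuousOn (φ ζ) (Icc 0 x))
    (hφeq : ∀ ζ, ∀ t ∈ Icc 0 x, φ ζ t = volterra v ζ (φ ζ) t) (R : ℝ) :
    TendstoUniformlyOn (fun n ζ => picard v ζ n x) (fun ζ => φ ζ x) atTop (closedBall 0 R) := by
  set K := x * Real.exp (R * x)
  have hK : ∀ ζ ∈ closedBall (0 : ℂ) R, ∀ s ∈ Icc 0 x, ‖S ζ s‖ ≤ K := fun ζ hζ s hs =>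
    norm_S_le_of_mem_Icc (mem_closedBall_zero_iff.1 hζ) hs
  have hφM : ∀ ζ ∈ closedBall (0 : ℂ) R, ∀ t ∈ Icc 0 x, ‖φ ζ t‖ ≤ K * Real.exp (K * C * x) :=
    fun ζ hζ _ ht => norm_le_of_eq_volterra hv hvC hx (hK ζ hζ) (hφ ζ) (hφeq ζ) ht
  rw [Metric.tendstoUniformlyOn_iff]
  intro ε hε
  have hlim := (FloorSemiring.tendsto_pow_div_factorial_atTop (K * C * x)).const_mul
    (K * Real.exp (K * C * x))
  rw [mul_zero] at hlim
  filter_upwards [hlim.eventually_lt_const hε] with n hn ζ hζ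
  rw [← mul_div_assoc] at hn
  rw [dist_eq_norm]
  exact (norm_sub_picard_le hv hvC hx (hK ζ hζ) (hφ ζ) (hφeq ζ) (hφM ζ hζ) n
    ⟨hx, le_rfl⟩).trans_lt hn

/-- For each fixed `x ≥ 0`, the regular solution `φ(x,·)` is an entire function
of `ζ`, and `φ(x,ζ) = φ(x,−ζ)`. -/
theorem regular_solution_entire_and_even
    (v : ℝ → ℝ) (hv_meas : Measurable v) (C₀ ρ : ℝ)
    (hC₀ : 0 < C₀) (hρ : 2 < ρ)
    (hv : ∀ x : ℝ, 0 ≤ x → |v x| ≤ C₀ * (1 + x) ^ (-ρ))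
    (φ : ℂ → ℝ → ℂ)
    (hφcont : ∀ ζ : ℂ, ContinuousOn (φ ζ) (Set.Ici 0))
    (hφeq : ∀ ζ : ℂ, ∀ x : ℝ, 0 ≤ x →
      φ ζ x = S ζ x + ∫ y in (0:ℝ)..x, S ζ (x - y) * (v y : ℂ) * φ ζ y) :
    ∀ x : ℝ, 0 ≤ x →
      Differentiable ℂ (fun ζ : ℂ => φ ζ x) ∧ ∀ ζ : ℂ, φ ζ x = φ (-ζ) x := by
  have hvC : ∀ y, 0 ≤ y → |v y| ≤ C₀ := fun y hy => (hv y hy).trans <| mul_le_of_le_one_right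
    hC₀.le (Real.rpow_le_one_of_one_le_of_nonpos (by linarith) (by linarith))
  have hv_int : ∀ x, IntegrableOn v (Icc 0 x) := fun x =>
    Measure.integrableOn_of_bounded measure_Icc_lt_top.ne hv_meas.aestronglyMeasurable
      (ae_restrict_of_forall_mem measurableSet_Icc fun y hy => (hvC y hy.1 : ‖v y‖ ≤ C₀))
  intro x hx
  have hvC' : ∀ y ∈ Icc 0 x, |v y| ≤ C₀ := fun y hy => hvC y hy.1
  have hφcont' : ∀ ζ, ContinuousOn (φ ζ) (Icc 0 x) := fun ζ =>
    (hφcont ζ).mono Icc_subset_Ici_self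
  have hφeq' : ∀ ζ, ∀ t ∈ Icc 0 x, φ ζ t = volterra v ζ (φ ζ) t := fun ζ t ht => hφeq ζ t ht.1
  have hlim : ∀ ζ, Tendsto (fun n => picard v ζ n x) atTop (𝓝 (φ ζ x)) := fun ζ =>
    tendsto_picard (hv_int x) hvC' hx (hφcont' ζ) (hφeq' ζ) ⟨hx, le_rfl⟩
  refine ⟨fun ζ₀ => ?_, fun ζ =>
    tendsto_nhds_unique (hlim ζ) (by simpa only [picard_neg] using hlim (-ζ))⟩
  have hunif := (tendstoUniformlyOn_picard (hv_int x) hvC' hx hφcont' hφeq' (‖ζ₀‖ + 1)).mono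
    ball_subset_closedBall
  have hdiff : DifferentiableOn ℂ (fun ζ => φ ζ x) (ball 0 (‖ζ₀‖ + 1)) :=
    hunif.tendstoLocallyUniformlyOn.differentiableOn (Eventually.of_forall fun n =>
      (differentiable_picard hv_int hvC n x hx).differentiableOn) isOpen_ball
  exact hdiff.differentiableAt (isOpen_ball.mem_nhds (mem_ball_zero_iff.2 (lt_add_one _)))
end

section
/- For each fixed x ≥ 0, the map ζ ↦ θ(x,ζ) is holomorphic on the open upper half-plane ℂ₊ = {ζ ∈ ℂ : Im ζ > 0} and is continuous on {ζ ∈ ℂ : Im ζ ≥ 0, ζ ≠ 0}. -/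
/-!
For `Im ζ ≥ 0` the Jost equation reads `θ = e^{iζ·} + T θ` with the Volterra operator
`T g x = ζ⁻¹ ∫_{(x,∞)} sin (ζ (x - y)) v(y) g(y) dy`. Since `‖sin (ζ (x - y))‖ ≤ e^{Im ζ (y - x)}`
for `y ≥ x`, the `n`-th term `Tⁿ e^{iζ·}` of the Neumann series is at most
`(C₀ / (‖ζ‖ (ρ - 1)))ⁿ / n! · e^{-Im ζ x}`, and the same estimate applied to the remainders
shows that every solution with `e^{Im ζ x} ‖θ x‖` bounded is the sum of this series. The bound is
uniform on `{Im ζ ≥ 0, ‖ζ‖ ≥ δ}`, where each term is continuous, and holomorphic in the interior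
(differentiate under the integral sign, with derivative bounds from the Cauchy estimates); the
uniformly convergent series inherits both properties.
-/

open MeasureTheory Set Filter Topology Metric Complex
open scoped Nat

section ParametricHolomorphy

variable {α E : Type*} [MeasurableSpace α] {μ : Measure α} [NormedAddCommGroup E]
  [NormedSpace ℂ E]

theorem aestronglyMeasurable_deriv_of_eventually {F : ℂ → α → E} {z₀ : ℂ}
    (hF_meas : ∀ᶠ z in 𝓝 z₀, AEStronglyMeasurable (F z) μ)
    (h_diff : ∀ᵐ a ∂μ, DifferentiableAt ℂ (F · a) z₀) :
    AEStronglyMeasurable (fun a ↦ deriv (F · a) z₀) μ := by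
  obtain ⟨r, hr, hball⟩ := Metric.eventually_nhds_iff_ball.1 hF_meas
  let t : ℕ → ℂ := fun n ↦ ((r / (n + 2) : ℝ) : ℂ)
  have ht_pos : ∀ n : ℕ, 0 < r / (n + 2) := fun n ↦ by positivity
  have ht : Tendsto t atTop (𝓝[≠] 0) := by
    refine tendsto_nhdsWithin_iff.2 ⟨?_, Eventually.of_forall fun n ↦ ?_⟩
    · have : Tendsto (fun n : ℕ ↦ r / ((n : ℝ) + 2)) atTop (𝓝 0) :=
        tendsto_const_nhds.div_atTop (tendsto_atTop_add_const_right _ 2 tendsto_natCast_atTop_atTop)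
      rw [← Complex.ofReal_zero]
      exact (Complex.continuous_ofReal.tendsto 0).comp this
    · exact Complex.ofReal_ne_zero.2 (ht_pos n).ne'
  refine aestronglyMeasurable_of_tendsto_ae atTop
    (f := fun n a ↦ (t n)⁻¹ • (F (z₀ + t n) a - F z₀ a)) (fun n ↦ ?_) ?_
  · refine ((hball _ ?_).sub (hball z₀ (mem_ball_self hr))).const_smul _
    rw [mem_ball, dist_self_add_left, Complex.norm_real, Real.norm_of_nonneg (ht_pos n).le]
    exact div_lt_self hr (by linarith [n.cast_nonneg (α := ℝ)])
  · filter_upwards [h_diff] with a ha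
    exact ha.hasDerivAt.tendsto_slope_zero.comp ht

/-- The Cauchy estimates turn the bound on `F` into a bound on its `z`-derivative on a smaller
disc. -/
theorem differentiableOn_integral_of_dominated {F : ℂ → α → E} {bound : α → ℝ} {U : Set ℂ}
    (hU : IsOpen U) (hF_meas : ∀ z ∈ U, AEStronglyMeasurable (F z) μ)
    (h_bound : ∀ᵐ a ∂μ, ∀ z ∈ U, ‖F z a‖ ≤ bound a) (bound_integrable : Integrable bound μ)
    (h_diff : ∀ᵐ a ∂μ, DifferentiableOn ℂ (F · a) U) :
    DifferentiableOn ℂ (fun z ↦ ∫ a, F z a ∂μ) U := by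
  intro z₀ hz₀
  obtain ⟨ε, hε, hεU⟩ := Metric.isOpen_iff.1 hU z₀ hz₀
  set r := ε / 2
  have hr : 0 < r := half_pos hε
  have hclosedBall : ∀ z ∈ ball z₀ r, closedBall z r ⊆ U := fun z hz w hw ↦ hεU <| by
    rw [mem_ball] at hz ⊢
    linarith [dist_triangle w z z₀, mem_closedBall.1 hw, show r + r = ε by ring]
  have hderiv_le : ∀ᵐ a ∂μ, ∀ z ∈ ball z₀ r, ‖deriv (F · a) z‖ ≤ bound a / r := by
    filter_upwards [h_bound, h_diff] with a ha_bound ha_diff z hz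
    refine Complex.norm_deriv_le_of_forall_mem_sphere_norm_le hr ?_
      fun w hw ↦ ha_bound w (hclosedBall z hz (sphere_subset_closedBall hw))
    exact (ha_diff.mono ((closure_ball z hr.ne').trans_subset (hclosedBall z hz))).diffContOnCl
  have hF_int : Integrable (F z₀) μ := bound_integrable.mono' (hF_meas z₀ hz₀)
    (h_bound.mono fun a ha ↦ ha z₀ hz₀)
  have h_hasDeriv : ∀ᵐ a ∂μ, ∀ z ∈ ball z₀ r, HasDerivAt (F · a) (deriv (F · a) z) z := by
    filter_upwards [h_diff] with a ha z hz
    exact (ha.differentiableAt (hU.mem_nhds (hεU (ball_subset_ball (half_le_self hε.le) hz))))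
      |>.hasDerivAt
  have hU_nhds : ∀ᶠ z in 𝓝 z₀, z ∈ U := hU.mem_nhds hz₀
  exact (hasDerivAt_integral_of_dominated_loc_of_deriv_le (ball_mem_nhds z₀ hr)
    (hU_nhds.mono hF_meas) hF_int
    (aestronglyMeasurable_deriv_of_eventually (hU_nhds.mono hF_meas)
      (h_diff.mono fun a ha ↦ ha.differentiableAt (hU.mem_nhds hz₀)))
    hderiv_le (bound_integrable.div_const r) h_hasDeriv).2.differentiableAt.differentiableWithinAt

end ParametricHolomorphy

theorem Complex.norm_sin_le_exp_abs_im (z : ℂ) : ‖sin z‖ ≤ Real.exp |z.im| := by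
  have h₁ : Real.exp z.im ≤ Real.exp |z.im| := Real.exp_le_exp.2 (le_abs_self _)
  have h₂ : Real.exp (-z.im) ≤ Real.exp |z.im| := Real.exp_le_exp.2 (neg_le_abs _)
  calc ‖sin z‖ = ‖exp (-z * I) - exp (z * I)‖ / 2 := by
        rw [sin, norm_div, norm_mul, norm_I, mul_one, RCLike.norm_ofNat]
    _ ≤ (‖exp (-z * I)‖ + ‖exp (z * I)‖) / 2 := by gcongr; exact norm_sub_le _ _
    _ ≤ Real.exp |z.im| := by simp only [norm_exp, neg_mul, neg_re, mul_I_re, neg_neg]; linarith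

theorem norm_sin_mul_sub_le {ζ : ℂ} (hζ : 0 ≤ ζ.im) {x y : ℝ} (hxy : x ≤ y) :
    ‖sin (ζ * (x - y))‖ ≤ Real.exp (ζ.im * (y - x)) := by
  refine (norm_sin_le_exp_abs_im _).trans_eq ?_
  have : (ζ * (x - y)).im = -(ζ.im * (y - x)) := by
    simp only [mul_im, sub_re, ofReal_re, sub_im, ofReal_im, sub_self, mul_zero, zero_add]; ring
  rw [this, abs_neg, abs_of_nonneg (mul_nonneg hζ (sub_nonneg.2 hxy))]

theorem norm_exp_I_mul_mul_ofReal (ζ : ℂ) (x : ℝ) :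
    ‖exp (I * ζ * x)‖ = Real.exp (-ζ.im * x) := by
  rw [norm_exp]; congr 1; simp [mul_re, mul_im]

theorem integrableOn_one_add_rpow_neg {p x : ℝ} (hp : 1 < p) (hx : -1 < x) :
    IntegrableOn (fun y : ℝ ↦ (1 + y) ^ (-p)) (Ioi x) := by
  simpa [add_comm] using integrableOn_add_rpow_Ioi_of_lt (m := 1) (by linarith : -p < -1) hx

theorem integral_Ioi_one_add_rpow_neg {p x : ℝ} (hp : 1 < p) (hx : -1 < x) :
    ∫ y in Ioi x, (1 + y) ^ (-p) = (1 + x) ^ (1 - p) / (p - 1) := by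
  have hlim : Tendsto (fun t : ℝ ↦ -(1 + t) ^ (1 - p) / (p - 1)) atTop (𝓝 0) := by
    have := ((tendsto_rpow_neg_atTop (by linarith : 0 < p - 1)).comp
      (tendsto_atTop_add_const_left _ 1 tendsto_id)).neg.div_const (p - 1)
    simpa [neg_sub] using this
  have hderiv : ∀ y ∈ Ici x,
      HasDerivAt (fun t : ℝ ↦ -(1 + t) ^ (1 - p) / (p - 1)) ((1 + y) ^ (-p)) y := fun y hy ↦ by
    have h : HasDerivAt (fun t : ℝ ↦ (1 + t) ^ (1 - p)) ((1 - p) * (1 + y) ^ (1 - p - 1) * 1) y :=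
      (Real.hasDerivAt_rpow_const (Or.inl (by linarith [mem_Ici.1 hy]))).comp y
        ((hasDerivAt_id y).const_add 1)
    refine (h.neg.div_const (p - 1)).congr_deriv ?_
    rw [show 1 - p - 1 = -p by ring]
    field_simp [show p - 1 ≠ 0 by linarith]
    ring
  rw [integral_Ioi_of_hasDerivAt_of_nonneg' hderiv
    (fun y hy ↦ Real.rpow_nonneg (by linarith [hx.trans hy]) _) hlim]
  ring

theorem exp_neg_mul_le_one {a x : ℝ} (ha : 0 ≤ a) (hx : 0 ≤ x) : Real.exp (-a * x) ≤ 1 :=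
  Real.exp_le_one_iff.2 (by nlinarith)

structure ShortRange (v : ℝ → ℝ) (C₀ ρ : ℝ) : Prop where
  measurable : Measurable v
  one_lt : 1 < ρ
  abs_le : ∀ x, 0 ≤ x → |v x| ≤ C₀ * (1 + x) ^ (-ρ)

theorem ShortRange.nonneg {v : ℝ → ℝ} {C₀ ρ : ℝ} (hv : ShortRange v C₀ ρ) : 0 ≤ C₀ := by
  simpa using (abs_nonneg _).trans (hv.abs_le 0 le_rfl)

noncomputable def jostOp (v : ℝ → ℝ) (ζ : ℂ) (g : ℝ → ℂ) (x : ℝ) : ℂ :=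
  ζ⁻¹ * ∫ y in Ioi x, sin (ζ * (x - y)) * v y * g y

noncomputable def jostTerm (v : ℝ → ℝ) : ℕ → ℂ → ℝ → ℂ
  | 0, ζ, x => exp (I * ζ * x)
  | n + 1, ζ, x => jostOp v ζ (jostTerm v n ζ) x

def JostAdmissible (ζ : ℂ) (g : ℝ → ℂ) : Prop :=
  AEStronglyMeasurable g (volume.restrict (Ici 0)) ∧
    ∃ M, ∀ x, 0 ≤ x → Real.exp (ζ.im * x) * ‖g x‖ ≤ M

section JostSeries

variable {v : ℝ → ℝ} {C₀ ρ : ℝ} {ζ : ℂ} {f g : ℝ → ℂ} {x : ℝ}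

theorem JostAdmissible.of_norm_le (hg : AEStronglyMeasurable g (volume.restrict (Ici 0))) {M : ℝ}
    (hM : ∀ y, 0 ≤ y → ‖g y‖ ≤ M * Real.exp (-ζ.im * y)) : JostAdmissible ζ g := by
  refine ⟨hg, M, fun y hy ↦ ?_⟩
  calc Real.exp (ζ.im * y) * ‖g y‖ ≤ Real.exp (ζ.im * y) * (M * Real.exp (-ζ.im * y)) := by
        gcongr; exact hM y hy
    _ = M := by rw [mul_left_comm, ← Real.exp_add]; simp

theorem JostAdmissible.norm_le (hg : JostAdmissible ζ g) :
    ∃ M, ∀ y, 0 ≤ y → ‖g y‖ ≤ M * Real.exp (-ζ.im * y) := by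
  obtain ⟨M, hM⟩ := hg.2
  refine ⟨M, fun y hy ↦ ?_⟩
  calc ‖g y‖ = Real.exp (-ζ.im * y) * (Real.exp (ζ.im * y) * ‖g y‖) := by
        rw [← mul_assoc, ← Real.exp_add]; simp
    _ ≤ M * Real.exp (-ζ.im * y) := by rw [mul_comm M]; gcongr; exact hM y hy

theorem JostAdmissible.sub (hf : JostAdmissible ζ f) (hg : JostAdmissible ζ g) :
    JostAdmissible ζ (f - g) := by
  obtain ⟨M, hM⟩ := hf.norm_le
  obtain ⟨N, hN⟩ := hg.norm_le
  refine .of_norm_le (hf.1.sub hg.1) (M := M + N) fun y hy ↦ ?_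
  calc ‖f y - g y‖ ≤ ‖f y‖ + ‖g y‖ := norm_sub_le _ _
    _ ≤ (M + N) * Real.exp (-ζ.im * y) := by rw [add_mul]; exact add_le_add (hM y hy) (hN y hy)

theorem norm_jostIntegrand_le (hv : ∀ y, 0 ≤ y → |v y| ≤ C₀ * (1 + y) ^ (-ρ)) (hζ : 0 ≤ ζ.im)
    {c w y : ℝ} (hx : 0 ≤ x) (hxy : x ≤ y) (hg : ‖g y‖ ≤ c * Real.exp (-ζ.im * y) * w) :
    ‖sin (ζ * (x - y)) * v y * g y‖ ≤ C₀ * c * Real.exp (-ζ.im * x) * ((1 + y) ^ (-ρ) * w) := by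
  have hvy := hv y (hx.trans hxy)
  calc ‖sin (ζ * (x - y)) * v y * g y‖ = ‖sin (ζ * (x - y))‖ * |v y| * ‖g y‖ := by
        rw [norm_mul, norm_mul, norm_real, Real.norm_eq_abs]
    _ ≤ Real.exp (ζ.im * (y - x)) * (C₀ * (1 + y) ^ (-ρ)) * (c * Real.exp (-ζ.im * y) * w) := by
        have := (abs_nonneg _).trans hvy
        gcongr
        exact norm_sin_mul_sub_le hζ hxy
    _ = C₀ * c * Real.exp (-ζ.im * x) * ((1 + y) ^ (-ρ) * w) := by
        rw [show -ζ.im * x = ζ.im * (y - x) + -ζ.im * y by ring, Real.exp_add]; ring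

theorem aestronglyMeasurable_jostIntegrand (hv : Measurable v)
    (hg : AEStronglyMeasurable g (volume.restrict (Ici 0))) (hx : 0 ≤ x) :
    AEStronglyMeasurable (fun y : ℝ ↦ sin (ζ * (x - y)) * v y * g y) (volume.restrict (Ioi x)) :=
  ((by fun_prop : Continuous fun y : ℝ ↦ sin (ζ * (x - y))).aestronglyMeasurable.mul
    (measurable_ofReal.comp hv).aestronglyMeasurable).mul
    (hg.mono_measure (Measure.restrict_mono (Ioi_subset_Ici hx) le_rfl))

theorem integrableOn_jostIntegrand (hv : ShortRange v C₀ ρ) (hζ : 0 ≤ ζ.im)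
    (hg : JostAdmissible ζ g) (hx : 0 ≤ x) :
    IntegrableOn (fun y : ℝ ↦ sin (ζ * (x - y)) * v y * g y) (Ioi x) := by
  obtain ⟨M, hM⟩ := hg.norm_le
  have hbound : ∀ y ∈ Ioi x, ‖sin (ζ * (x - y)) * v y * g y‖ ≤
      C₀ * M * Real.exp (-ζ.im * x) * (1 + y) ^ (-ρ) := fun y hy ↦ by
    simpa using norm_jostIntegrand_le hv.abs_le hζ hx hy.le (w := 1)
      (by simpa using hM y (hx.trans hy.le))
  exact ((integrableOn_one_add_rpow_neg hv.one_lt (by linarith)).const_mul _).mono'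
    (aestronglyMeasurable_jostIntegrand hv.measurable hg.1 hx)
    ((ae_restrict_iff' measurableSet_Ioi).2 (Eventually.of_forall hbound))

theorem jostOp_sub (hv : ShortRange v C₀ ρ) (hζ : 0 ≤ ζ.im) (hf : JostAdmissible ζ f)
    (hg : JostAdmissible ζ g) (hx : 0 ≤ x) :
    jostOp v ζ (f - g) x = jostOp v ζ f x - jostOp v ζ g x := by
  rw [jostOp, jostOp, jostOp, ← mul_sub, ← integral_sub (integrableOn_jostIntegrand hv hζ hf hx)
    (integrableOn_jostIntegrand hv hζ hg hx)]
  congr 2 with y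
  simp only [Pi.sub_apply]
  ring

theorem aestronglyMeasurable_jostOp (hv : Measurable v)
    (hg : AEStronglyMeasurable g (volume.restrict (Ici 0))) :
    AEStronglyMeasurable (jostOp v ζ g) (volume.restrict (Ici 0)) := by
  set μ := volume.restrict (Ici (0 : ℝ))
  set F : ℝ × ℝ → ℂ := {p | p.1 < p.2}.indicator fun p ↦ sin (ζ * (p.1 - p.2)) * v p.2 * g p.2
  have hF : AEStronglyMeasurable F (μ.prod μ) := by
    refine AEStronglyMeasurable.indicator ?_ (measurableSet_lt measurable_fst measurable_snd)
    exact ((by fun_prop : Continuous fun p : ℝ × ℝ ↦ sin (ζ * (p.1 - p.2))).aestronglyMeasurable.mul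
      (measurable_ofReal.comp (hv.comp measurable_snd)).aestronglyMeasurable).mul
      (hg.comp_quasiMeasurePreserving Measure.quasiMeasurePreserving_snd)
  have hslice : ∀ x ∈ Ici (0 : ℝ), jostOp v ζ g x = ζ⁻¹ * ∫ y, F (x, y) ∂μ := by
    intro x hx
    rw [jostOp, ← inter_eq_left.2 (Ioi_subset_Ici hx),
      ← Measure.restrict_restrict measurableSet_Ioi, ← integral_indicator measurableSet_Ioi]
    rfl
  refine (hF.integral_prod_right'.const_mul ζ⁻¹).congr ?_
  filter_upwards [ae_restrict_mem measurableSet_Ici] with x hx using (hslice x hx).symm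

theorem norm_jostOp_le (hv : ShortRange v C₀ ρ) (hζ : 0 ≤ ζ.im) {c s : ℝ} (hs : 0 ≤ s)
    (hg : ∀ y, 0 ≤ y → ‖g y‖ ≤ c * Real.exp (-ζ.im * y) * (1 + y) ^ (-s)) (hx : 0 ≤ x) :
    ‖jostOp v ζ g x‖ ≤
      ‖ζ‖⁻¹ * (C₀ * c * Real.exp (-ζ.im * x) * ((1 + x) ^ (1 - (ρ + s)) / (ρ + s - 1))) := by
  have hρs : 1 < ρ + s := by linarith [hv.one_lt]
  have hbound : ∀ y ∈ Ioi x, ‖sin (ζ * (x - y)) * v y * g y‖ ≤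
      C₀ * c * Real.exp (-ζ.im * x) * (1 + y) ^ (-(ρ + s)) := fun y hy ↦ by
    rw [neg_add, Real.rpow_add (by linarith [hx.trans_lt hy])]
    exact norm_jostIntegrand_le hv.abs_le hζ hx hy.le (hg y (hx.trans hy.le))
  rw [jostOp, norm_mul, norm_inv]
  gcongr
  calc ‖∫ y in Ioi x, sin (ζ * (x - y)) * v y * g y‖
      ≤ ∫ y in Ioi x, C₀ * c * Real.exp (-ζ.im * x) * (1 + y) ^ (-(ρ + s)) :=
        norm_integral_le_of_norm_le ((integrableOn_one_add_rpow_neg hρs (by linarith)).const_mul _)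
          ((ae_restrict_iff' measurableSet_Ioi).2 (Eventually.of_forall hbound))
    _ = C₀ * c * Real.exp (-ζ.im * x) * ((1 + x) ^ (1 - (ρ + s)) / (ρ + s - 1)) := by
        rw [integral_const_mul, integral_Ioi_one_add_rpow_neg hρs (by linarith)]

/-- Since `jostOp` integrates over `(x, ∞)` only, the weight `(1 + x) ^ (-n (ρ - 1))` carried
through the induction produces the factor `1 / (n + 1)` at each step. -/
theorem norm_le_of_forall_eq_jostOp (hv : ShortRange v C₀ ρ) (hζ : 0 ≤ ζ.im) {d : ℕ → ℝ → ℂ} {M : ℝ}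
    (hd₀ : ∀ y, 0 ≤ y → ‖d 0 y‖ ≤ M * Real.exp (-ζ.im * y))
    (hd : ∀ n x, 0 ≤ x → d (n + 1) x = jostOp v ζ (d n) x) (n : ℕ) (hx : 0 ≤ x) :
    ‖d n x‖ ≤ M * (C₀ / (‖ζ‖ * (ρ - 1))) ^ n / n ! * Real.exp (-ζ.im * x) := by
  set A := C₀ / (‖ζ‖ * (ρ - 1))
  have hρ : 0 < ρ - 1 := sub_pos.2 hv.one_lt
  have hweighted : ∀ n x, 0 ≤ x →
      ‖d n x‖ ≤ M * A ^ n / n ! * Real.exp (-ζ.im * x) * (1 + x) ^ (-(n * (ρ - 1))) := by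
    intro n
    induction n with
    | zero => intro x hx; simpa using hd₀ x hx
    | succ n ih =>
      intro x hx
      rw [hd n x hx]
      refine (norm_jostOp_le hv hζ (by positivity) ih hx).trans_eq ?_
      rw [show 1 - (ρ + n * (ρ - 1)) = -((n + 1 : ℕ) * (ρ - 1)) by push_cast; ring,
        show ρ + n * (ρ - 1) - 1 = (n + 1 : ℕ) * (ρ - 1) by push_cast; ring,
        Nat.factorial_succ, pow_succ, Nat.cast_mul]
      simp only [A]
      -- `ring` splits the inverse of a product only when the factors are atoms
      generalize ((n + 1 : ℕ) : ℝ) = a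
      generalize ρ - 1 = b
      ring
  have hM : 0 ≤ M := by simpa using (norm_nonneg _).trans (hd₀ 0 le_rfl)
  have hA : 0 ≤ A := div_nonneg hv.nonneg (by positivity)
  refine (hweighted n x hx).trans (mul_le_of_le_one_right (by positivity) ?_)
  exact Real.rpow_le_one_of_one_le_of_nonpos (by linarith) (by nlinarith [n.cast_nonneg (α := ℝ)])

theorem aestronglyMeasurable_jostTerm (hv : Measurable v) (n : ℕ) :
    AEStronglyMeasurable (jostTerm v n ζ) (volume.restrict (Ici 0)) := by
  induction n with
  | zero => exact (by fun_prop : Continuous fun x : ℝ ↦ exp (I * ζ * x)).aestronglyMeasurable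
  | succ n ih => exact aestronglyMeasurable_jostOp hv ih

theorem norm_jostTerm_le (hv : ShortRange v C₀ ρ) (hζ : 0 ≤ ζ.im) (n : ℕ) (hx : 0 ≤ x) :
    ‖jostTerm v n ζ x‖ ≤ (C₀ / (‖ζ‖ * (ρ - 1))) ^ n / n ! * Real.exp (-ζ.im * x) := by
  simpa using norm_le_of_forall_eq_jostOp hv hζ (d := fun n ↦ jostTerm v n ζ) (M := 1)
    (fun y _ ↦ (norm_exp_I_mul_mul_ofReal ζ y).trans_le (one_mul _).ge) (fun _ _ _ ↦ rfl) n hx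

theorem jostAdmissible_jostTerm (hv : ShortRange v C₀ ρ) (hζ : 0 ≤ ζ.im) (n : ℕ) :
    JostAdmissible ζ (jostTerm v n ζ) :=
  .of_norm_le (aestronglyMeasurable_jostTerm hv.measurable n)
    fun _ hy ↦ norm_jostTerm_le hv hζ n hy

theorem norm_jostTerm_le_of_le_norm (hv : ShortRange v C₀ ρ) {δ : ℝ} (hδ : 0 < δ)
    (hζ : 0 ≤ ζ.im) (hδζ : δ ≤ ‖ζ‖) (n : ℕ) (hx : 0 ≤ x) :
    ‖jostTerm v n ζ x‖ ≤ (C₀ / (δ * (ρ - 1))) ^ n / n ! * Real.exp (-ζ.im * x) := by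
  have := hv.nonneg
  have := sub_pos.2 hv.one_lt
  refine (norm_jostTerm_le hv hζ n hx).trans ?_
  gcongr

theorem norm_jostTerm_le_pow_div_factorial (hv : ShortRange v C₀ ρ) {δ : ℝ} (hδ : 0 < δ)
    (hζ : 0 ≤ ζ.im) (hδζ : δ ≤ ‖ζ‖) (n : ℕ) (hx : 0 ≤ x) :
    ‖jostTerm v n ζ x‖ ≤ (C₀ / (δ * (ρ - 1))) ^ n / n ! := by
  have := hv.nonneg
  have := sub_pos.2 hv.one_lt
  exact (norm_jostTerm_le_of_le_norm hv hδ hζ hδζ n hx).trans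
    (mul_le_of_le_one_right (by positivity) (exp_neg_mul_le_one hζ hx))

section Regularity

variable {S : Set ℂ} {δ : ℝ}

theorem norm_jostIntegrand_jostTerm_le (hv : ShortRange v C₀ ρ) (hδ : 0 < δ)
    (hζ : 0 ≤ ζ.im) (hδζ : δ ≤ ‖ζ‖) (n : ℕ) {y : ℝ} (hx : 0 ≤ x) (hxy : x ≤ y) :
    ‖sin (ζ * (x - y)) * v y * jostTerm v n ζ y‖ ≤
      C₀ * ((C₀ / (δ * (ρ - 1))) ^ n / n !) * (1 + y) ^ (-ρ) := by
  refine (norm_jostIntegrand_le hv.abs_le hζ hx hxy (c := (C₀ / (δ * (ρ - 1))) ^ n / n !)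
    (w := 1) ?_).trans ?_
  · simpa using norm_jostTerm_le_of_le_norm hv hδ hζ hδζ n (hx.trans hxy)
  · have := hv.nonneg
    have := sub_pos.2 hv.one_lt
    rw [mul_one, mul_right_comm]
    exact mul_le_of_le_one_right (mul_nonneg (by positivity) (Real.rpow_nonneg (by linarith) _))
      (exp_neg_mul_le_one hζ hx)

theorem continuousOn_jostTerm (hv : ShortRange v C₀ ρ) (hδ : 0 < δ)
    (hS : ∀ ζ ∈ S, 0 ≤ ζ.im ∧ δ ≤ ‖ζ‖) (n : ℕ) (hx : 0 ≤ x) :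
    ContinuousOn (fun ζ ↦ jostTerm v n ζ x) S := by
  induction n generalizing x with
  | zero => exact (by fun_prop : Continuous fun ζ : ℂ ↦ exp (I * ζ * x)).continuousOn
  | succ n ih =>
    refine (continuousOn_inv₀.mono fun ζ hζ ↦ ?_).mul (continuousOn_of_dominated
      (bound := fun y ↦ C₀ * ((C₀ / (δ * (ρ - 1))) ^ n / n !) * (1 + y) ^ (-ρ))
      (fun ζ _ ↦ aestronglyMeasurable_jostIntegrand hv.measurable
        (aestronglyMeasurable_jostTerm hv.measurable n) hx)
      (fun ζ hζ ↦ (ae_restrict_iff' measurableSet_Ioi).2 (Eventually.of_forall fun y hy ↦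
        norm_jostIntegrand_jostTerm_le hv hδ (hS ζ hζ).1 (hS ζ hζ).2 n hx hy.le))
      ((integrableOn_one_add_rpow_neg hv.one_lt (by linarith)).const_mul _)
      ((ae_restrict_iff' measurableSet_Ioi).2 (Eventually.of_forall fun y hy ↦
        (by fun_prop : Continuous fun ζ : ℂ ↦ sin (ζ * (x - y)) * v y).continuousOn.mul
          (ih (hx.trans hy.le)))))
    exact norm_pos_iff.1 (hδ.trans_le (hS ζ hζ).2)

theorem differentiableOn_jostTerm (hv : ShortRange v C₀ ρ) (hδ : 0 < δ) (hS_open : IsOpen S)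
    (hS : ∀ ζ ∈ S, 0 ≤ ζ.im ∧ δ ≤ ‖ζ‖) (n : ℕ) (hx : 0 ≤ x) :
    DifferentiableOn ℂ (fun ζ ↦ jostTerm v n ζ x) S := by
  induction n generalizing x with
  | zero => exact (by fun_prop : Differentiable ℂ fun ζ : ℂ ↦ exp (I * ζ * x)).differentiableOn
  | succ n ih =>
    refine (differentiableOn_inv.mono fun ζ hζ ↦ ?_).mul (differentiableOn_integral_of_dominated
      (bound := fun y ↦ C₀ * ((C₀ / (δ * (ρ - 1))) ^ n / n !) * (1 + y) ^ (-ρ)) hS_open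
      (fun ζ _ ↦ aestronglyMeasurable_jostIntegrand hv.measurable
        (aestronglyMeasurable_jostTerm hv.measurable n) hx)
      ((ae_restrict_iff' measurableSet_Ioi).2 (Eventually.of_forall fun y hy ζ hζ ↦
        norm_jostIntegrand_jostTerm_le hv hδ (hS ζ hζ).1 (hS ζ hζ).2 n hx hy.le))
      ((integrableOn_one_add_rpow_neg hv.one_lt (by linarith)).const_mul _)
      ((ae_restrict_iff' measurableSet_Ioi).2 (Eventually.of_forall fun y hy ↦
        (by fun_prop : Differentiable ℂ fun ζ : ℂ ↦ sin (ζ * (x - y)) * v y).differentiableOn.mul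
          (ih (hx.trans hy.le)))))
    exact norm_pos_iff.1 (hδ.trans_le (hS ζ hζ).2)

end Regularity

theorem continuousOn_tsum_jostTerm (hv : ShortRange v C₀ ρ) (hx : 0 ≤ x) :
    ContinuousOn (fun ζ ↦ ∑' n, jostTerm v n ζ x) {ζ | 0 ≤ ζ.im ∧ ζ ≠ 0} := by
  refine continuousOn_of_locally_continuousOn fun ζ₀ hζ₀ ↦ ⟨{ζ | ‖ζ₀‖ / 2 < ‖ζ‖},
    isOpen_lt continuous_const continuous_norm, half_lt_self (norm_pos_iff.2 hζ₀.2), ?_⟩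
  have hδ : 0 < ‖ζ₀‖ / 2 := half_pos (norm_pos_iff.2 hζ₀.2)
  have hS : ∀ ζ ∈ {ζ : ℂ | 0 ≤ ζ.im ∧ ζ ≠ 0} ∩ {ζ | ‖ζ₀‖ / 2 < ‖ζ‖}, 0 ≤ ζ.im ∧ ‖ζ₀‖ / 2 ≤ ‖ζ‖ :=
    fun ζ hζ ↦ ⟨hζ.1.1, hζ.2.le⟩
  exact continuousOn_tsum (fun n ↦ continuousOn_jostTerm hv hδ hS n hx)
    (Real.summable_pow_div_factorial _) fun n ζ hζ ↦
      norm_jostTerm_le_pow_div_factorial hv hδ (hS ζ hζ).1 (hS ζ hζ).2 n hx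

theorem differentiableOn_tsum_jostTerm (hv : ShortRange v C₀ ρ) (hx : 0 ≤ x) :
    DifferentiableOn ℂ (fun ζ ↦ ∑' n, jostTerm v n ζ x) {ζ | 0 < ζ.im} := by
  refine differentiableOn_of_locally_differentiableOn fun ζ₀ hζ₀ ↦ ?_
  have hδ : 0 < ‖ζ₀‖ / 2 := half_pos (norm_pos_iff.2 fun h ↦ by simp [h] at hζ₀)
  refine ⟨{ζ | ‖ζ₀‖ / 2 < ‖ζ‖}, isOpen_lt continuous_const continuous_norm,
    show ‖ζ₀‖ / 2 < ‖ζ₀‖ by linarith, ?_⟩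
  have hS : ∀ ζ ∈ {ζ : ℂ | 0 < ζ.im} ∩ {ζ | ‖ζ₀‖ / 2 < ‖ζ‖}, 0 ≤ ζ.im ∧ ‖ζ₀‖ / 2 ≤ ‖ζ‖ :=
    fun ζ hζ ↦ ⟨hζ.1.le, hζ.2.le⟩
  have hS_open : IsOpen ({ζ : ℂ | 0 < ζ.im} ∩ {ζ | ‖ζ₀‖ / 2 < ‖ζ‖}) :=
    (isOpen_lt continuous_const continuous_im).inter (isOpen_lt continuous_const continuous_norm)
  exact differentiableOn_tsum_of_summable_norm (Real.summable_pow_div_factorial _)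
    (fun n ↦ differentiableOn_jostTerm hv hδ hS_open hS n hx) hS_open fun n ζ hζ ↦
      norm_jostTerm_le_pow_div_factorial hv hδ (hS ζ hζ).1 (hS ζ hζ).2 n hx

/-- Every admissible solution of the Jost equation is the sum of its Neumann series: the
remainders `θ - ∑_{k<n} jostTerm k` are iterates of `jostOp`, hence are `O(Aⁿ / n!)`. -/
theorem hasSum_jostTerm (hv : ShortRange v C₀ ρ) (hζ : 0 ≤ ζ.im) {θ : ℝ → ℂ}
    (hθ : JostAdmissible ζ θ) (hθ_eq : ∀ x, 0 ≤ x → θ x = exp (I * ζ * x) + jostOp v ζ θ x)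
    (hx : 0 ≤ x) : HasSum (fun n ↦ jostTerm v n ζ x) (θ x) := by
  set d : ℕ → ℝ → ℂ := fun n y ↦ θ y - ∑ k ∈ Finset.range n, jostTerm v k ζ y
  have hd_succ : ∀ n, d (n + 1) = d n - jostTerm v n ζ := fun n ↦ by
    ext y; simp only [d, Finset.sum_range_succ, Pi.sub_apply]; ring
  have hd_adm : ∀ n, JostAdmissible ζ (d n) := by
    intro n
    induction n with
    | zero => simpa [d] using hθ
    | succ n ih => rw [hd_succ]; exact ih.sub (jostAdmissible_jostTerm hv hζ n)
  have hd_eq : ∀ n x, 0 ≤ x → d (n + 1) x = jostOp v ζ (d n) x := by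
    intro n
    induction n with
    | zero =>
      intro x hx
      simp only [d, zero_add, Finset.sum_range_one, Finset.sum_range_zero, sub_zero]
      rw [hθ_eq x hx, jostTerm, add_sub_cancel_left]
    | succ n ih =>
      intro x hx
      rw [hd_succ, Pi.sub_apply, ih x hx, jostTerm,
        ← jostOp_sub hv hζ (hd_adm n) (jostAdmissible_jostTerm hv hζ n) hx, ← hd_succ]
  obtain ⟨M, hM⟩ := hθ.norm_le
  have hd_le := fun n ↦
    norm_le_of_forall_eq_jostOp hv hζ (d := d) (by simpa [d] using hM) hd_eq n hx
  have hd_lim : Tendsto (fun n ↦ d n x) atTop (𝓝 0) := by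
    refine squeeze_zero_norm hd_le ?_
    simpa [mul_div_assoc] using ((FloorSemiring.tendsto_pow_div_factorial_atTop _).const_mul
      M).mul_const (Real.exp (-ζ.im * x))
  have hsum : Summable fun n ↦ jostTerm v n ζ x :=
    .of_norm_bounded ((Real.summable_pow_div_factorial _).mul_right _) fun n ↦
      norm_jostTerm_le hv hζ n hx
  rw [hsum.hasSum_iff_tendsto_nat]
  simpa [d] using tendsto_const_nhds (x := θ x) |>.sub hd_lim

end JostSeries

theorem jost_solution_holomorphic_continuous_general
    (v : ℝ → ℝ) (hv_meas : Measurable v) (C₀ ρ : ℝ)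
    (hρ : 2 < ρ)
    (hv : ∀ x : ℝ, 0 ≤ x → |v x| ≤ C₀ * (1 + x) ^ (-ρ))
    (θ : ℂ → ℝ → ℂ)
    (hθcont : ∀ ζ : ℂ, 0 ≤ ζ.im → ζ ≠ 0 → ContinuousOn (θ ζ) (Set.Ici 0))
    (hθbdd : ∀ ζ : ℂ, 0 ≤ ζ.im → ζ ≠ 0 →
      ∃ M : ℝ, ∀ x : ℝ, 0 ≤ x → Real.exp (ζ.im * x) * ‖θ ζ x‖ ≤ M)
    (hθeq : ∀ ζ : ℂ, 0 ≤ ζ.im → ζ ≠ 0 → ∀ x : ℝ, 0 ≤ x →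
      θ ζ x = Complex.exp (Complex.I * ζ * x) +
        ζ⁻¹ * ∫ y in Set.Ioi x, Complex.sin (ζ * ((x : ℂ) - (y : ℂ))) * (v y : ℂ) * θ ζ y) :
    ∀ x : ℝ, 0 ≤ x →
      DifferentiableOn ℂ (fun ζ : ℂ => θ ζ x) {ζ : ℂ | 0 < ζ.im} ∧
      ContinuousOn (fun ζ : ℂ => θ ζ x) {ζ : ℂ | 0 ≤ ζ.im ∧ ζ ≠ 0} := by
  intro x hx
  have hshort : ShortRange v C₀ ρ := ⟨hv_meas, by linarith, hv⟩
  have hθ_tsum : ∀ ζ ∈ {ζ : ℂ | 0 ≤ ζ.im ∧ ζ ≠ 0}, θ ζ x = ∑' n, jostTerm v n ζ x :=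
    fun ζ ⟨hζ, hζ₀⟩ ↦ (hasSum_jostTerm hshort hζ
      ⟨(hθcont ζ hζ hζ₀).aestronglyMeasurable measurableSet_Ici, hθbdd ζ hζ hζ₀⟩
      (hθeq ζ hζ hζ₀) hx).tsum_eq.symm
  exact ⟨(differentiableOn_tsum_jostTerm hshort hx).congr fun ζ hζ ↦
      hθ_tsum ζ ⟨hζ.le, fun h ↦ by simp [h] at hζ⟩,
    (continuousOn_tsum_jostTerm hshort hx).congr hθ_tsum⟩

/-- For each fixed `x ≥ 0`, the Jost solution `ζ ↦ θ(x,ζ)` is holomorphic on the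
open upper half-plane and continuous on `{Im ζ ≥ 0, ζ ≠ 0}`. -/
theorem jost_solution_holomorphic_continuous
    (v : ℝ → ℝ) (hv_meas : Measurable v) (C₀ ρ : ℝ)
    (hC₀ : 0 < C₀) (hρ : 2 < ρ)
    (hv : ∀ x : ℝ, 0 ≤ x → |v x| ≤ C₀ * (1 + x) ^ (-ρ))
    (θ : ℂ → ℝ → ℂ)
    (hθcont : ∀ ζ : ℂ, 0 ≤ ζ.im → ζ ≠ 0 → ContinuousOn (θ ζ) (Set.Ici 0))
    (hθbdd : ∀ ζ : ℂ, 0 ≤ ζ.im → ζ ≠ 0 →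
      ∃ M : ℝ, ∀ x : ℝ, 0 ≤ x → Real.exp (ζ.im * x) * ‖θ ζ x‖ ≤ M)
    (hθeq : ∀ ζ : ℂ, 0 ≤ ζ.im → ζ ≠ 0 → ∀ x : ℝ, 0 ≤ x →
      θ ζ x = Complex.exp (Complex.I * ζ * x) +
        ζ⁻¹ * ∫ y in Set.Ioi x, Complex.sin (ζ * ((x : ℂ) - (y : ℂ))) * (v y : ℂ) * θ ζ y) :
    ∀ x : ℝ, 0 ≤ x →
      DifferentiableOn ℂ (fun ζ : ℂ => θ ζ x) {ζ : ℂ | 0 < ζ.im} ∧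
      ContinuousOn (fun ζ : ℂ => θ ζ x) {ζ : ℂ | 0 ≤ ζ.im ∧ ζ ≠ 0} :=
  jost_solution_holomorphic_continuous_general v hv_meas C₀ ρ hρ hv θ hθcont hθbdd hθeq
end
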